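/- Let k ≥ 3 be an integer, R > 0, ξ = 2π/(3k) and r = R·cos ξ, and let P_0,…,P_{k−1} be the pearl regions. Then for all i ≠ j, every y ∈ P_i and every z ∈ P_j, the point z does not lie in the open disk whose diameter is the segment from the origin to y; that is, |z − y/2| ≥ |y|/2. -/

import Mathlib

/-!
Since `‖z - y/2‖² = (‖y‖/2)² + (‖z‖² - ⟪z, y⟫)`, the claim is `⟪z, y⟫ ≤ ‖z‖²`. Two distinct pearls
are separated by an angular gap of at least `ξ` in both directions around the circle, so the polar
angles of `y` and `z` differ by an angle `θ` with `cos θ < cos ξ`. Since there are at least two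
pearls, `ξ ≤ π/3` and `cos ξ ≥ 0`, hence `⟪z, y⟫ = ‖z‖ ‖y‖ cos θ ≤ ‖z‖ R cos ξ ≤ ‖z‖²`.
-/

open MeasureTheory Real

noncomputable section

/-- The Euclidean plane. -/
abbrev E2 := EuclideanSpace ℝ (Fin 2)

/-- The polar angle of a point of the plane, normalized to lie in `[0, 2π)` for
nonzero points. -/
def polarAngle (z : E2) : ℝ :=
  if Complex.arg ⟨z 0, z 1⟩ < 0 then Complex.arg ⟨z 0, z 1⟩ + 2 * π
  else Complex.arg ⟨z 0, z 1⟩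

/-- With `ξ = 2π/(3k)` and `r = R cos ξ`, the `i`-th pearl region is the set of points
`z` with `r ≤ |z| ≤ R` whose polar angle lies in `[3iξ, (3i+2)ξ)`. -/
def pearl (k : ℕ) (R : ℝ) (i : ℕ) : Set E2 :=
  {z | R * Real.cos (2 * π / (3 * k)) ≤ ‖z‖ ∧ ‖z‖ ≤ R ∧
    polarAngle z ∈ Set.Ico (3 * i * (2 * π / (3 * k))) ((3 * i + 2) * (2 * π / (3 * k)))}

theorem half_norm_le_norm_sub_half_smul_iff {F : Type*} [NormedAddCommGroup F]
    [InnerProductSpace ℝ F] (y z : F) :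
    ‖y‖ / 2 ≤ ‖z - (1 / 2 : ℝ) • y‖ ↔ inner ℝ z y ≤ ‖z‖ ^ 2 := by
  have hexpand : ‖z - (1 / 2 : ℝ) • y‖ ^ 2 = (‖y‖ / 2) ^ 2 + (‖z‖ ^ 2 - inner ℝ z y) := by
    rw [norm_sub_sq_real, real_inner_smul_right, norm_smul, Real.norm_of_nonneg (by norm_num)]
    ring
  rw [← sq_le_sq₀ (by positivity) (norm_nonneg _), hexpand]
  constructor <;> intro h <;> linarith

theorem cos_lt_cos_of_lt_of_lt_two_pi_sub {ξ a : ℝ} (hξ : 0 ≤ ξ) (h₁ : ξ < a)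
    (h₂ : a < 2 * π - ξ) : cos a < cos ξ := by
  rcases le_or_gt a π with ha | ha
  · exact cos_lt_cos_of_nonneg_of_le_pi hξ ha h₁
  · rw [← cos_two_pi_sub]
    exact cos_lt_cos_of_nonneg_of_le_pi hξ (by linarith) (by linarith)

theorem cos_sub_lt_cos_of_mem_Ico_of_ne {ξ : ℝ} {k i j : ℕ} (hξ : 3 * k * ξ = 2 * π)
    (hi : i < k) (hj : j < k) (hij : i ≠ j) {a b : ℝ}
    (ha : a ∈ Set.Ico (3 * i * ξ) ((3 * i + 2) * ξ))
    (hb : b ∈ Set.Ico (3 * j * ξ) ((3 * j + 2) * ξ)) :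
    cos (b - a) < cos ξ := by
  wlog hlt : i < j generalizing i j a b
  · rw [← cos_neg, neg_sub]
    exact this hj hi hij.symm hb ha (by omega)
  have hξpos : 0 < ξ := pos_of_mul_pos_right (hξ ▸ two_pi_pos) (by positivity)
  have hij' : (i : ℝ) + 1 ≤ j := by exact_mod_cast hlt
  have hjk : (j : ℝ) + 1 ≤ k := by exact_mod_cast hj
  obtain ⟨ha₁, ha₂⟩ := ha
  obtain ⟨hb₁, hb₂⟩ := hb
  apply cos_lt_cos_of_lt_of_lt_two_pi_sub hξpos.le <;> nlinarith

theorem Complex.inner_eq_norm_mul_norm_mul_cos_arg_sub (w z : ℂ) :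
    inner ℝ w z = ‖w‖ * ‖z‖ * Real.cos (arg z - arg w) := by
  calc inner ℝ w z = (‖z‖ * Real.cos (arg z)) * (‖w‖ * Real.cos (arg w))
        + (‖z‖ * Real.sin (arg z)) * (‖w‖ * Real.sin (arg w)) := by
          simp only [Complex.inner, mul_re, conj_re, conj_im, norm_mul_cos_arg, norm_mul_sin_arg]
          ring
    _ = ‖w‖ * ‖z‖ * Real.cos (arg z - arg w) := by rw [Real.cos_sub]; ring

theorem Complex.orthonormalBasisOneI_repr_symm_eq_mk (z : EuclideanSpace ℝ (Fin 2)) :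
    Complex.orthonormalBasisOneI.repr.symm z = ⟨z 0, z 1⟩ := by
  apply Complex.ext <;> simp

theorem polarAngle_coe_angle (z : E2) :
    (polarAngle z : Real.Angle) = Complex.arg ⟨z 0, z 1⟩ := by
  unfold polarAngle
  split_ifs <;> simp

theorem inner_eq_norm_mul_norm_mul_cos_polarAngle_sub (y z : E2) :
    inner ℝ y z = ‖y‖ * ‖z‖ * cos (polarAngle z - polarAngle y) := by
  set e := Complex.orthonormalBasisOneI.repr.symm
  have hcos : cos (polarAngle z - polarAngle y) = cos (Complex.arg (e z) - Complex.arg (e y)) := by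
    rw [← Real.Angle.cos_coe, ← Real.Angle.cos_coe, Real.Angle.coe_sub, Real.Angle.coe_sub,
      polarAngle_coe_angle, polarAngle_coe_angle, Complex.orthonormalBasisOneI_repr_symm_eq_mk,
      Complex.orthonormalBasisOneI_repr_symm_eq_mk]
  rw [hcos, ← e.inner_map_map, ← e.norm_map y, ← e.norm_map z,
    Complex.inner_eq_norm_mul_norm_mul_cos_arg_sub]

theorem pearl_regions_avoid_disks_general (k : ℕ) (R : ℝ)
    (i j : ℕ) (hi : i < k) (hj : j < k) (hij : i ≠ j)
    (y z : E2) (hy : y ∈ pearl k R i) (hz : z ∈ pearl k R j) :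
    ‖y‖ / 2 ≤ ‖z - (1/2 : ℝ) • y‖ := by
  obtain ⟨-, hyR, hyθ⟩ := hy
  obtain ⟨hzr, -, hzθ⟩ := hz
  have hk : (2 : ℝ) ≤ k := by exact_mod_cast (by omega : 2 ≤ k)
  have hξ₀ : 0 ≤ 2 * π / (3 * k) := by positivity
  set ξ := 2 * π / (3 * k)
  have hξ : 3 * k * ξ = 2 * π := mul_div_cancel₀ _ (by linarith : (0 : ℝ) < 3 * k).ne'
  have hcosξ : 0 ≤ cos ξ := by
    apply cos_nonneg_of_mem_Icc ⟨by linarith [pi_pos], ?_⟩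
    rw [div_le_div_iff₀ (by positivity) two_pos]
    nlinarith [pi_pos]
  have hcos := (cos_sub_lt_cos_of_mem_Ico_of_ne hξ hj hi hij.symm hzθ hyθ).le
  rw [half_norm_le_norm_sub_half_smul_iff, inner_eq_norm_mul_norm_mul_cos_polarAngle_sub]
  calc ‖z‖ * ‖y‖ * cos (polarAngle y - polarAngle z) ≤ ‖z‖ * (‖y‖ * cos ξ) := by
        rw [← mul_assoc]; gcongr
    _ ≤ ‖z‖ * (R * cos ξ) := by gcongr
    _ ≤ ‖z‖ ^ 2 := by rw [sq]; gcongr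

/-- For `k ≥ 3`, `R > 0`, and distinct pearl regions `P i` and `P j`
(`i, j < k`), no point `z ∈ P j` lies in the open disk whose diameter is the segment
from the origin to a point `y ∈ P i`; that is, `|z − y/2| ≥ |y|/2`. -/
theorem pearl_regions_avoid_disks (k : ℕ) (hk : 3 ≤ k) (R : ℝ) (hR : 0 < R)
    (i j : ℕ) (hi : i < k) (hj : j < k) (hij : i ≠ j)
    (y z : E2) (hy : y ∈ pearl k R i) (hz : z ∈ pearl k R j) :
    ‖y‖ / 2 ≤ ‖z - (1/2 : ℝ) • y‖ :=
  pearl_regions_avoid_disks_general k R i j hi hj hij y z hy hz
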